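/- arXiv:1409.4640 — 2 statements merged into one kernel-verified Lean document; each statement's English description precedes it below -/
import Mathlib

section
/- Let $f(z) = a_0 + a_1 z + \cdots + a_d z^d$ be a polynomial with real coefficients, $d \ge 2$, $a_0 > 0$ and $a_d > 0$. If there exists a positive integer $m$ such that all coefficients $0,1,\dots,md$ of $f^m$ are strictly positive, then $|f(z)| < f(|z|)$ for every complex $z \notin [0,\infty)$, and $a_1 > 0$ and $a_{d-1} > 0$. -/
/-!
Put `g = f ^ m`. All coefficients of `g` are nonnegative and its two lowest ones are positive,
so the triangle inequality gives `‖g(z)‖ ≤ ‖g₀ + g₁ z‖ + (g(‖z‖) - g₀ - g₁ ‖z‖)`, and the first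
term is strictly smaller than `g₀ + g₁ ‖z‖` unless `z ≥ 0`, since `ℂ` is strictly convex.
As `g > 0` on `[0, ∞)`, `f` has no zero there and hence stays positive, so `m`-th roots may be
taken in `‖f(z)‖ ^ m < f(‖z‖) ^ m`. The first coefficient of `g` is `m a₀ ^ (m - 1) a₁`, which
forces `a₁ > 0`; applied to the reversed polynomial, the same computation gives `a_{d-1} > 0`.
-/

open Complex Set

namespace Polynomial

theorem coeff_one_pow {R : Type*} [CommSemiring R] (p : R[X]) (n : ℕ) :
    (p ^ n).coeff 1 = n * p.coeff 1 * p.coeff 0 ^ (n - 1) := by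
  have h := PowerSeries.coeff_one_pow n (p : PowerSeries R)
  rwa [← coe_pow, coeff_coe, coeff_coe, ← PowerSeries.coeff_zero_eq_constantCoeff_apply,
    coeff_coe] at h

theorem reverse_pow {R : Type*} [Semiring R] [NoZeroDivisors R] (p : R[X]) (n : ℕ) :
    (p ^ n).reverse = p.reverse ^ n := by
  induction n with
  | zero => rw [pow_zero, pow_zero, ← C_1, reverse_C]
  | succ n ih => rw [pow_succ, pow_succ, reverse_mul_of_domain, ih]

section Ordered

variable {R : Type*} [CommSemiring R] [LinearOrder R] [IsStrictOrderedRing R] {p : R[X]} {n : ℕ}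

theorem coeff_one_pos_of_coeff_one_pow_pos (h0 : 0 < p.coeff 0) (h : 0 < (p ^ n).coeff 1) :
    0 < p.coeff 1 := by
  rw [coeff_one_pow] at h
  exact pos_of_mul_pos_right (pos_of_mul_pos_left h (pow_pos h0 _).le) n.cast_nonneg

theorem nextCoeff_pos_of_nextCoeff_pow_pos [NoZeroDivisors R] (hlead : 0 < p.leadingCoeff)
    (h : 0 < (p ^ n).nextCoeff) : 0 < p.nextCoeff := by
  rw [← coeff_one_reverse] at h ⊢
  rw [reverse_pow] at h
  exact coeff_one_pos_of_coeff_one_pow_pos (by rwa [coeff_zero_reverse]) h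

theorem eval_pos_of_coeff_nonneg (hp : ∀ k, 0 ≤ p.coeff k) (h0 : 0 < p.coeff 0) {x : R}
    (hx : 0 ≤ x) : 0 < p.eval x := by
  rw [eval_eq_sum_range]
  exact Finset.sum_pos' (fun k _ => mul_nonneg (hp k) (pow_nonneg hx k)) ⟨0, by simp, by simpa⟩

end Ordered

theorem eval_pos_of_eval_ne_zero {p : ℝ[X]} (h0 : 0 < p.eval 0)
    (hne : ∀ x, 0 ≤ x → p.eval x ≠ 0) {x : ℝ} (hx : 0 ≤ x) : 0 < p.eval x := by
  by_contra! hle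
  obtain ⟨t, ht, hzero⟩ :=
    isPreconnected_Ici.intermediate_value hx self_mem_Ici p.continuousOn ⟨hle, h0.le⟩
  exact hne t ht hzero

theorem norm_aeval_le_eval_norm {A : Type*} [NormedRing A] [NormedAlgebra ℝ A] [NormOneClass A]
    {p : ℝ[X]} (hp : ∀ k, 0 ≤ p.coeff k) (z : A) : ‖aeval z p‖ ≤ p.eval ‖z‖ := by
  rw [aeval_eq_sum_range, eval_eq_sum_range]
  refine (norm_sum_le _ _).trans (Finset.sum_le_sum fun k _ => ?_)
  rw [norm_smul, Real.norm_of_nonneg (hp k)]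
  exact mul_le_mul_of_nonneg_left (norm_pow_le z k) (hp k)

end Polynomial

open Polynomial

theorem Complex.norm_ofReal_add_ofReal_mul_lt {a b : ℝ} (ha : 0 < a) (hb : 0 < b) {z : ℂ}
    (hz : z ∉ ofReal '' Ici 0) : ‖(a + b * z : ℂ)‖ < a + b * ‖z‖ := by
  have hz0 : z ≠ 0 := fun h => hz ⟨0, self_mem_Ici, by simp [h]⟩
  have harg : arg z ≠ 0 := fun h => hz ⟨z.re, (arg_eq_zero_iff.mp h).1,
    Complex.ext (by simp) (by simp [(arg_eq_zero_iff.mp h).2])⟩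
  have hray : ¬SameRay ℝ (a : ℂ) (b * z) := by
    rw [sameRay_iff, arg_ofReal_of_nonneg ha.le, arg_real_mul z hb]
    simp [ha.ne', hb.ne', hz0, harg.symm]
  simpa [norm_mul, abs_of_pos ha, abs_of_pos hb] using norm_add_lt_of_not_sameRay hray

theorem Polynomial.norm_aeval_lt_eval_norm {p : ℝ[X]} (hp : ∀ k, 0 ≤ p.coeff k)
    (h0 : 0 < p.coeff 0) (h1 : 0 < p.coeff 1) {z : ℂ} (hz : z ∉ ofReal '' Ici 0) :
    ‖aeval z p‖ < p.eval ‖z‖ := by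
  set q := p - C (p.coeff 0) - C (p.coeff 1) * X
  have hq : ∀ k, 0 ≤ q.coeff k := by
    intro k
    rcases k with _ | _ | k <;> simp [q, coeff_C, coeff_X, hp]
  have haeval : aeval z p = (p.coeff 0 + p.coeff 1 * z : ℂ) + aeval z q := by simp [q]
  have heval : p.eval ‖z‖ = (p.coeff 0 + p.coeff 1 * ‖z‖) + q.eval ‖z‖ := by simp [q]
  calc ‖aeval z p‖ ≤ ‖(p.coeff 0 + p.coeff 1 * z : ℂ)‖ + ‖aeval z q‖ := by
        rw [haeval]; exact norm_add_le _ _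
    _ < (p.coeff 0 + p.coeff 1 * ‖z‖) + q.eval ‖z‖ :=
        add_lt_add_of_lt_of_le (norm_ofReal_add_ofReal_mul_lt h0 h1 hz)
          (norm_aeval_le_eval_norm hq z)
    _ = p.eval ‖z‖ := heval.symm

theorem deAngelis_necessity (f : Polynomial ℝ) (hd : 2 ≤ f.natDegree)
    (h0 : 0 < f.coeff 0) (hlead : 0 < f.coeff f.natDegree)
    (hm : ∃ m : ℕ, 0 < m ∧ ∀ k ≤ m * f.natDegree, 0 < (f ^ m).coeff k) :
    (∀ z : ℂ, z ∉ (Complex.ofReal '' Set.Ici (0 : ℝ)) →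
      ‖Polynomial.aeval z f‖ < Polynomial.eval ‖z‖ f) ∧
    0 < f.coeff 1 ∧ 0 < f.coeff (f.natDegree - 1) := by
  obtain ⟨m, hm0, hcoeff⟩ := hm
  have hg : ∀ k, 0 ≤ (f ^ m).coeff k := fun k => (le_or_gt k (m * f.natDegree)).elim
    (fun hk => (hcoeff k hk).le)
    (fun hk => (coeff_eq_zero_of_natDegree_lt (natDegree_pow_le.trans_lt hk)).ge)
  have hg0 := hcoeff 0 (Nat.zero_le _)
  have hg1 := hcoeff 1 (Nat.mul_pos hm0 (by omega))
  have hf_pos : ∀ x, 0 ≤ x → 0 < f.eval x := fun x hx =>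
    eval_pos_of_eval_ne_zero (by rwa [← coeff_zero_eq_eval_zero]) (fun y hy hfy =>
      (eval_pos_of_coeff_nonneg hg hg0 hy).ne' (by rw [eval_pow, hfy, zero_pow hm0.ne'])) hx
  refine ⟨fun z hz => ?_, coeff_one_pos_of_coeff_one_pow_pos h0 hg1, ?_⟩
  · have h := norm_aeval_lt_eval_norm hg hg0 hg1 hz
    rw [map_pow, norm_pow, eval_pow] at h
    exact lt_of_pow_lt_pow_left₀ m (hf_pos _ (norm_nonneg z)).le h
  · rw [← nextCoeff_of_natDegree_pos (by omega)]
    refine nextCoeff_pos_of_nextCoeff_pow_pos (n := m) hlead ?_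
    rw [nextCoeff_of_natDegree_pos (by rw [natDegree_pow]; positivity), natDegree_pow]
    exact hcoeff _ (Nat.sub_le _ _)
end

section
/- (Obrechkoff's inequality.) Let $f$ be a nonconstant polynomial with real, nonnegative coefficients, and let $N$ denote the number of nonzero roots of $f$ in $\mathbb{C}$, counted with multiplicity. Then for every $\alpha$ with $0 \le \alpha \le \pi/2$, the number of nonzero roots $z$ of $f$ (counted with multiplicity) satisfying $|\arg z| \le \alpha$ is at most $(2\alpha/\pi) \cdot N$. -/
/-!
For `|ξ| = r` the nonnegative coefficients give `|f(ξ)| ≤ f(r)`, so for every unimodular `w` the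
product of `|r - w z|` over the roots `z` is at most the product of `|r - z|`. Taking logarithms,
dividing by `r` and integrating over `r > 0` turns this into an inequality between the integrals
`∫₀^∞ (log (r + |z|) - log |r - z|) dr / r = (π - |arg z|)² / 2`,
which are computed by writing the integrand as `∫_{|arg z|}^π |z| sin u / |r - |z| e^{iu}|² du`
and swapping the two integrations. With `w = e^{±2iα}` this says that the second differences
`H(θ + 2α) + H(θ - 2α) - 2 H(θ)` of `H(θ) = (π - |θ|)² / 2`, summed over the arguments `θ` of the
nonzero roots, are nonnegative. Each term is at most `4α²`, and because of the concave corner of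
`H` at `0` it is at most `4α² - 2πα` when `|θ| ≤ α`, which bounds the number of such roots.
The case `α = 0` follows by letting `α` decrease to `0`.
-/

open Polynomial Real Set MeasureTheory Filter Topology

theorem Multiset.sum_map_filter_of_ne {ι M : Type*} [AddCommMonoid M] {s : Multiset ι}
    {p : ι → Prop} [DecidablePred p] {g : ι → M} (h : ∀ x ∈ s, g x ≠ 0 → p x) :
    ((s.filter p).map g).sum = (s.map g).sum := by
  conv_rhs => rw [← Multiset.filter_add_not p s, Multiset.map_add, Multiset.sum_add]
  suffices (((s.filter fun x => ¬ p x).map g).sum = 0) by rw [this, add_zero]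
  refine Multiset.sum_eq_zero fun y hy => ?_
  obtain ⟨x, hx, rfl⟩ := Multiset.mem_map.1 hy
  rw [Multiset.mem_filter] at hx
  exact not_not.1 fun hne => hx.2 (h x hx.1 hne)

theorem MeasureTheory.integral_multiset_sum_map {ι α G : Type*} [MeasurableSpace α]
    {μ : Measure α} [NormedAddCommGroup G] [NormedSpace ℝ G] (s : Multiset ι) {F : ι → α → G}
    (hF : ∀ i ∈ s, Integrable (F i) μ) :
    ∫ a, (s.map fun i => F i a).sum ∂μ = (s.map fun i => ∫ a, F i a ∂μ).sum := by
  classical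
  have hsum (g : ι → G) : (s.map g).sum = ∑ x ∈ s.toEnumFinset, g x.1 := by
    conv_lhs => rw [← Multiset.map_toEnumFinset_fst s, Multiset.map_map]
    rfl
  simp_rw [hsum]
  exact integral_finsetSum _ fun x hx => hF x.1 (Multiset.mem_of_mem_toEnumFinset hx)

namespace Obrechkoff

noncomputable def kernel (ρ u r : ℝ) : ℝ := ρ * sin u / (r ^ 2 - 2 * r * ρ * cos u + ρ ^ 2)

noncomputable def logKernel (z : ℂ) (r : ℝ) : ℝ := (log (r + ‖z‖) - log ‖(r : ℂ) - z‖) / r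

lemma sq_sub_two_mul_mul_cos_add_sq (r ρ u : ℝ) :
    r ^ 2 - 2 * r * ρ * cos u + ρ ^ 2 = (r - ρ * cos u) ^ 2 + (ρ * sin u) ^ 2 := by
  linear_combination -ρ ^ 2 * sin_sq_add_cos_sq u

lemma sq_sub_two_mul_mul_cos_add_sq_pos {r ρ : ℝ} (h : 0 ≤ r * ρ) (hrρ : r ≠ ρ) (u : ℝ) :
    0 < r ^ 2 - 2 * r * ρ * cos u + ρ ^ 2 := by
  have := pow_pos (abs_pos.2 (sub_ne_zero.2 hrρ)) 2
  rw [sq_abs] at this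
  nlinarith [cos_le_one u]

lemma kernel_nonneg {ρ u : ℝ} (hρ : 0 ≤ ρ) (hu : 0 ≤ u) (hu' : u ≤ π) (r : ℝ) :
    0 ≤ kernel ρ u r := by
  rw [kernel, sq_sub_two_mul_mul_cos_add_sq]
  have := sin_nonneg_of_nonneg_of_le_pi hu hu'
  positivity

lemma lintegral_Ioi_kernel {ρ u : ℝ} (hρ : 0 < ρ) (hu : 0 < u) (hu' : u ≤ π) :
    ∫⁻ r in Ioi 0, ENNReal.ofReal (kernel ρ u r) = ENNReal.ofReal (π - u) := by
  rcases hu'.eq_or_lt with rfl | hu'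
  · simp [kernel]
  have hsin : 0 < sin u := sin_pos_of_pos_of_lt_pi hu hu'
  have hb : 0 < ρ * sin u := mul_pos hρ hsin
  set g : ℝ → ℝ := fun r => arctan ((r - ρ * cos u) / (ρ * sin u))
  have hderiv (r : ℝ) : HasDerivAt g (kernel ρ u r) r := by
    refine (((hasDerivAt_id r).sub_const _).div_const _).arctan.congr_deriv ?_
    rw [kernel, sq_sub_two_mul_mul_cos_add_sq, id]
    have := hsin.ne'
    field_simp
    ring
  have hnonneg (r : ℝ) : 0 ≤ kernel ρ u r := kernel_nonneg hρ.le hu.le hu'.le r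
  have hlim : Tendsto g atTop (𝓝 (π / 2)) :=
    (tendsto_arctan_atTop.mono_right nhdsWithin_le_nhds).comp
      ((tendsto_atTop_add_const_right _ _ tendsto_id).atTop_div_const hb)
  have hg0 : g 0 = u - π / 2 := by
    have : -(ρ * cos u) / (ρ * sin u) = tan (-(π / 2 - u)) := by
      rw [tan_neg, tan_pi_div_two_sub, tan_eq_sin_div_cos]
      field_simp
    simp only [g, zero_sub, this]
    rw [arctan_tan] <;> linarith
  rw [← ofReal_integral_eq_lintegral_ofReal
      (integrableOn_Ioi_deriv_of_nonneg' (fun r _ => hderiv r) (fun r _ => hnonneg r) hlim)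
      (Eventually.of_forall hnonneg),
    integral_Ioi_of_hasDerivAt_of_nonneg' (fun r _ => hderiv r) (fun r _ => hnonneg r) hlim, hg0]
  ring_nf

lemma continuous_kernel {ρ r : ℝ} (hρ : 0 ≤ ρ) (hr : 0 < r) (hrρ : r ≠ ρ) :
    Continuous fun u => kernel ρ u r :=
  (continuous_const.mul continuous_sin).div (by fun_prop)
    fun u => (sq_sub_two_mul_mul_cos_add_sq_pos (by positivity) hrρ u).ne'

lemma integral_kernel {ρ r : ℝ} (hρ : 0 ≤ ρ) (hr : 0 < r) (hrρ : r ≠ ρ) (θ : ℝ) :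
    ∫ u in θ..π, kernel ρ u r =
      (log (r + ρ) - log (r ^ 2 - 2 * r * ρ * cos θ + ρ ^ 2) / 2) / r := by
  have hQ := sq_sub_two_mul_mul_cos_add_sq_pos (by positivity : 0 ≤ r * ρ) hrρ
  have hderiv (u : ℝ) : HasDerivAt
      (fun u => log (r ^ 2 - 2 * r * ρ * cos u + ρ ^ 2) / (2 * r)) (kernel ρ u r) u := by
    refine (((((hasDerivAt_cos u).const_mul (2 * r * ρ)).const_sub (r ^ 2)).add_const
      (ρ ^ 2)).log (hQ u).ne' |>.div_const (2 * r)).congr_deriv ?_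
    rw [kernel]
    field_simp
  rw [intervalIntegral.integral_eq_sub_of_hasDerivAt (fun u _ => hderiv u)
    ((continuous_kernel hρ hr hrρ).intervalIntegrable _ _)]
  have hπ : r ^ 2 - 2 * r * ρ * cos π + ρ ^ 2 = (r + ρ) ^ 2 := by rw [cos_pi]; ring
  rw [hπ, log_pow]
  field_simp
  push_cast
  ring

lemma norm_ofReal_sub_sq (r : ℝ) (z : ℂ) :
    ‖(r : ℂ) - z‖ ^ 2 = r ^ 2 - 2 * r * ‖z‖ * cos |Complex.arg z| + ‖z‖ ^ 2 := by
  rw [cos_abs, mul_assoc _ ‖z‖, Complex.norm_mul_cos_arg, Complex.sq_norm, Complex.sq_norm,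
    Complex.normSq_apply, Complex.normSq_apply]
  simp only [Complex.sub_re, Complex.ofReal_re, Complex.sub_im, Complex.ofReal_im]
  ring

lemma integral_kernel_eq_logKernel {z : ℂ} {r : ℝ} (hr : 0 < r) (hrz : r ≠ ‖z‖) :
    ∫ u in |Complex.arg z|..π, kernel ‖z‖ u r = logKernel z r := by
  rw [integral_kernel (norm_nonneg z) hr hrz, logKernel, ← norm_ofReal_sub_sq, log_pow]
  push_cast
  ring

lemma norm_ofReal_sub_pos {r : ℝ} {y : ℂ} (hr : 0 ≤ r) (h : r ≠ ‖y‖) : 0 < ‖(r : ℂ) - y‖ := by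
  refine norm_pos_iff.2 (sub_ne_zero.2 fun hy => h ?_)
  rw [← hy, Complex.norm_real, norm_of_nonneg hr]

lemma logKernel_nonneg {z : ℂ} {r : ℝ} (hr : 0 < r) (hrz : r ≠ ‖z‖) : 0 ≤ logKernel z r := by
  have hle : ‖(r : ℂ) - z‖ ≤ r + ‖z‖ := by
    simpa [norm_of_nonneg hr.le] using norm_sub_le (r : ℂ) z
  exact div_nonneg (sub_nonneg.2 (log_le_log (norm_ofReal_sub_pos hr.le hrz) hle)) hr.le

lemma lintegral_logKernel {z : ℂ} (hz : z ≠ 0) :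
    ∫⁻ r in Ioi 0, ENNReal.ofReal (logKernel z r) =
      ENNReal.ofReal ((π - |Complex.arg z|) ^ 2 / 2) := by
  have hθ : 0 ≤ |Complex.arg z| := abs_nonneg _
  have hθπ : |Complex.arg z| ≤ π := Complex.abs_arg_le_pi z
  calc ∫⁻ r in Ioi 0, ENNReal.ofReal (logKernel z r)
      = ∫⁻ r in Ioi 0, ∫⁻ u in Ioc |Complex.arg z| π, ENNReal.ofReal (kernel ‖z‖ u r) := by
        refine setLIntegral_congr_fun_ae measurableSet_Ioi ?_
        filter_upwards [Measure.ae_ne volume ‖z‖] with r hrz hr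
        rw [← integral_kernel_eq_logKernel hr hrz, intervalIntegral.integral_of_le hθπ,
          ofReal_integral_eq_lintegral_ofReal
            ((continuous_kernel (norm_nonneg z) hr hrz).integrableOn_Icc.mono_set
              Ioc_subset_Icc_self)]
        filter_upwards [ae_restrict_mem measurableSet_Ioc] with u hu
        exact kernel_nonneg (norm_nonneg z) (hθ.trans hu.1.le) hu.2 r
    _ = ∫⁻ u in Ioc |Complex.arg z| π, ∫⁻ r in Ioi 0, ENNReal.ofReal (kernel ‖z‖ u r) :=
        lintegral_lintegral_swap (by unfold kernel; fun_prop)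
    _ = ∫⁻ u in Ioc |Complex.arg z| π, ENNReal.ofReal (π - u) :=
        setLIntegral_congr_fun measurableSet_Ioc fun u hu =>
          lintegral_Ioi_kernel (norm_pos_iff.2 hz) (hθ.trans_lt hu.1) hu.2
    _ = ENNReal.ofReal ((π - |Complex.arg z|) ^ 2 / 2) := by
        rw [← ofReal_integral_eq_lintegral_ofReal (f := fun u => π - u)
          (continuous_const.sub continuous_id).integrableOn_Ioc]
        · rw [← intervalIntegral.integral_of_le hθπ,
            intervalIntegral.integral_comp_sub_left (fun x => x), integral_id]
          ring_nf
        · filter_upwards [ae_restrict_mem measurableSet_Ioc] with u hu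
          exact sub_nonneg.2 hu.2

lemma integral_logKernel {z : ℂ} (hz : z ≠ 0) :
    IntegrableOn (logKernel z) (Ioi 0) ∧
      ∫ r in Ioi 0, logKernel z r = (π - |Complex.arg z|) ^ 2 / 2 := by
  have hnonneg : 0 ≤ᵐ[volume.restrict (Ioi 0)] logKernel z := by
    filter_upwards [ae_restrict_mem measurableSet_Ioi,
      ae_restrict_of_ae (Measure.ae_ne volume ‖z‖)] with r hr hrz
    exact logKernel_nonneg hr hrz
  have hmeas : AEStronglyMeasurable (logKernel z) (volume.restrict (Ioi 0)) :=
    (by unfold logKernel; fun_prop : Measurable (logKernel z)).aestronglyMeasurable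
  refine ⟨(lintegral_ofReal_ne_top_iff_integrable hmeas hnonneg).1 ?_, ?_⟩
  · rw [lintegral_logKernel hz]
    exact ENNReal.ofReal_ne_top
  · rw [integral_eq_lintegral_of_nonneg_ae hnonneg hmeas, lintegral_logKernel hz,
      ENNReal.toReal_ofReal (by positivity)]

lemma norm_eval_map_le_eval_norm {f : ℝ[X]} (hf : ∀ k, 0 ≤ f.coeff k) (ξ : ℂ) :
    ‖(f.map (algebraMap ℝ ℂ)).eval ξ‖ ≤ f.eval ‖ξ‖ := by
  rw [eval_map_algebraMap, aeval_eq_sum_range, eval_eq_sum_range]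
  refine (norm_sum_le _ _).trans_eq (Finset.sum_congr rfl fun i _ => ?_)
  rw [norm_smul, norm_pow, norm_of_nonneg (hf i)]

lemma prod_roots_norm_sub_le {f : ℝ[X]} (hf : ∀ k, 0 ≤ f.coeff k) (ξ : ℂ) :
    ((f.map (algebraMap ℝ ℂ)).roots.map fun z => ‖ξ - z‖).prod ≤
      ((f.map (algebraMap ℝ ℂ)).roots.map fun z => ‖(‖ξ‖ : ℂ) - z‖).prod := by
  rcases eq_or_ne f 0 with rfl | hf0
  · simp
  set P := f.map (algebraMap ℝ ℂ)
  have hlc : 0 < ‖P.leadingCoeff‖ := norm_pos_iff.2 (leadingCoeff_ne_zero.2 (map_ne_zero hf0))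
  have hnorm_eval (x : ℂ) :
      ‖P.eval x‖ = ‖P.leadingCoeff‖ * (P.roots.map fun z => ‖x - z‖).prod := by
    rw [(IsAlgClosed.splits P).eval_eq_prod_roots, norm_mul]
    congr 1
    simpa [Multiset.map_map] using map_multiset_prod (normHom : ℂ →*₀ ℝ) (P.roots.map (x - ·))
  refine le_of_mul_le_mul_left ?_ hlc
  rw [← hnorm_eval, ← hnorm_eval]
  calc ‖P.eval ξ‖ ≤ f.eval ‖ξ‖ := norm_eval_map_le_eval_norm hf ξ
    _ ≤ ‖P.eval (‖ξ‖ : ℂ)‖ := by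
      rw [eval_map, ← Complex.coe_algebraMap, eval₂_at_apply, Complex.coe_algebraMap,
        Complex.norm_real]
      exact le_norm_self _

lemma sum_roots_log_norm_sub_mul_le {f : ℝ[X]} (hf : ∀ k, 0 ≤ f.coeff k) {r : ℝ} (hr : 0 < r)
    (hroots : ∀ z ∈ (f.map (algebraMap ℝ ℂ)).roots, r ≠ ‖z‖) {w : ℂ} (hw : ‖w‖ = 1) :
    ((f.map (algebraMap ℝ ℂ)).roots.map fun z => log ‖(r : ℂ) - w * z‖).sum ≤
      ((f.map (algebraMap ℝ ℂ)).roots.map fun z => log ‖(r : ℂ) - z‖).sum := by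
  have hw0 : w ≠ 0 := norm_ne_zero_iff.1 (by rw [hw]; exact one_ne_zero)
  have hrot (z : ℂ) : ‖(r : ℂ) - w * z‖ = ‖(r : ℂ) / w - z‖ := by
    rw [← one_mul ‖_ - z‖, ← hw, ← norm_mul, mul_sub, mul_div_cancel₀ _ hw0]
  have hξ : ‖(r : ℂ) / w‖ = r := by simp [hw, hr.le]
  have hpos (v : ℂ) (hv : ‖v‖ = 1) :
      ∀ x ∈ (f.map (algebraMap ℝ ℂ)).roots.map fun z => ‖(r : ℂ) - v * z‖, 0 < x := by
    simp only [Multiset.mem_map]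
    rintro _ ⟨z, hz, rfl⟩
    exact norm_ofReal_sub_pos hr.le (by rw [norm_mul, hv, one_mul]; exact hroots z hz)
  have hlog (v : ℂ) (hv : ‖v‖ = 1) :
      ((f.map (algebraMap ℝ ℂ)).roots.map fun z => log ‖(r : ℂ) - v * z‖).sum =
        log ((f.map (algebraMap ℝ ℂ)).roots.map fun z => ‖(r : ℂ) - v * z‖).prod := by
    rw [log_multiset_prod fun x hx => (hpos v hv x hx).ne', Multiset.map_map]
    rfl
  have hlog₁ := hlog 1 norm_one
  simp only [one_mul] at hlog₁
  rw [hlog w hw, hlog₁]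
  refine log_le_log (Multiset.prod_pos (hpos w hw)) ?_
  simpa only [hrot, hξ] using prod_roots_norm_sub_le hf ((r : ℂ) / w)

lemma sq_pi_sub_abs_toIocMod {x : ℝ} (h₁ : -(2 * π) ≤ x) (h₂ : x ≤ 2 * π) :
    (π - |toIocMod two_pi_pos (-π) x|) ^ 2 = (π - |x|) ^ 2 := by
  have hπ := pi_pos
  rcases le_or_gt x (-π) with hx | hx
  · have : toIocMod two_pi_pos (-π) x = x + 2 * π :=
      (toIocMod_eq_iff _).2 ⟨⟨by linarith, by linarith⟩, -1, by simp⟩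
    rw [this, abs_of_nonneg (by linarith), abs_of_nonpos (by linarith)]
    ring
  rcases le_or_gt x π with hx' | hx'
  · rw [(toIocMod_eq_self _).2 ⟨hx, by linarith⟩]
  · have : toIocMod two_pi_pos (-π) x = x - 2 * π :=
      (toIocMod_eq_iff _).2 ⟨⟨by linarith, by linarith⟩, 1, by simp⟩
    rw [this, abs_of_nonpos (by linarith), abs_of_nonneg (by linarith)]
    ring

lemma sq_pi_sub_abs_arg_exp_mul {z : ℂ} (hz : z ≠ 0) {γ : ℝ} (hγ : |γ| ≤ π) :
    (π - |Complex.arg (Complex.exp (γ * Complex.I) * z)|) ^ 2 = (π - |Complex.arg z + γ|) ^ 2 := by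
  have hrot : Complex.exp (γ * Complex.I) * z =
      ‖z‖ * Complex.exp ((Complex.arg z + γ : ℝ) * Complex.I) := by
    conv_lhs => rw [← Complex.norm_mul_exp_arg_mul_I z]
    push_cast
    rw [add_mul, Complex.exp_add]
    ring
  rw [hrot, Complex.arg_real_mul _ (norm_pos_iff.2 hz), Complex.arg_exp_mul_I,
    sq_pi_sub_abs_toIocMod] <;>
  linarith [Complex.neg_pi_lt_arg z, Complex.arg_le_pi z, abs_le.1 hγ]

def secondDiff (g : ℝ → ℝ) (θ β : ℝ) : ℝ := g (θ + β) + g (θ - β) - 2 * g θ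

lemma secondDiff_sq_sub_abs_of_abs_le (c : ℝ) {θ β : ℝ} (h : |θ| ≤ β) :
    secondDiff (fun x => (c - |x|) ^ 2 / 2) θ β = β ^ 2 - 2 * c * (β - |θ|) := by
  obtain ⟨h₁, h₂⟩ := abs_le.1 h
  rw [secondDiff, abs_of_nonneg (by linarith : 0 ≤ θ + β), abs_of_nonpos (by linarith : θ - β ≤ 0)]
  rcases abs_cases θ with ⟨h, _⟩ | ⟨h, _⟩ <;> rw [h] <;> ring

lemma secondDiff_sq_sub_abs_le {c : ℝ} (hc : 0 ≤ c) (θ : ℝ) {β : ℝ} (hβ : 0 ≤ β) :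
    secondDiff (fun x => (c - |x|) ^ 2 / 2) θ β ≤ β ^ 2 := by
  rcases le_total |θ| β with h | h
  · rw [secondDiff_sq_sub_abs_of_abs_le c h]
    nlinarith
  rw [secondDiff]
  rcases le_or_gt 0 θ with hθ | hθ
  · rw [abs_of_nonneg hθ] at h
    rw [abs_of_nonneg (by linarith : 0 ≤ θ + β), abs_of_nonneg (by linarith : 0 ≤ θ - β),
      abs_of_nonneg hθ]
    nlinarith
  · rw [abs_of_neg hθ] at h
    rw [abs_of_nonpos (by linarith : θ + β ≤ 0), abs_of_nonpos (by linarith : θ - β ≤ 0),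
      abs_of_neg hθ]
    nlinarith

lemma sum_filter_secondDiff_logKernel_nonneg {f : ℝ[X]} (hf : ∀ k, 0 ≤ f.coeff k) {r : ℝ}
    (hr : 0 < r) (hroots : ∀ z ∈ (f.map (algebraMap ℝ ℂ)).roots, r ≠ ‖z‖) (β : ℝ) :
    0 ≤ (((f.map (algebraMap ℝ ℂ)).roots.filter (· ≠ 0)).map fun z =>
      secondDiff (fun γ => logKernel (Complex.exp (γ * Complex.I) * z) r) 0 β).sum := by
  have hw (γ : ℝ) : ‖Complex.exp (γ * Complex.I)‖ = 1 := Complex.norm_exp_ofReal_mul_I γ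
  have hG (z : ℂ) : secondDiff (fun γ => logKernel (Complex.exp (γ * Complex.I) * z) r) 0 β =
      ((log ‖(r : ℂ) - z‖ - log ‖(r : ℂ) - Complex.exp (β * Complex.I) * z‖) +
        (log ‖(r : ℂ) - z‖ - log ‖(r : ℂ) - Complex.exp ((-β : ℝ) * Complex.I) * z‖)) * r⁻¹ := by
    simp only [secondDiff, logKernel, zero_add, zero_sub, Complex.ofReal_zero, zero_mul,
      Complex.exp_zero, one_mul, norm_mul, hw]
    ring
  simp_rw [hG]
  rw [Multiset.sum_map_filter_of_ne (p := (· ≠ 0)) fun z _ hz h0 => hz (by simp [h0]),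
    Multiset.sum_map_mul_right, Multiset.sum_map_add, Multiset.sum_map_sub, Multiset.sum_map_sub]
  exact mul_nonneg (add_nonneg (sub_nonneg.2 (sum_roots_log_norm_sub_mul_le hf hr hroots (hw β)))
    (sub_nonneg.2 (sum_roots_log_norm_sub_mul_le hf hr hroots (hw (-β))))) (inv_nonneg.2 hr.le)

lemma integral_secondDiff_logKernel {z : ℂ} (hz : z ≠ 0) {β : ℝ} (hβ : |β| ≤ π) :
    IntegrableOn (fun r => secondDiff (fun γ => logKernel (Complex.exp (γ * Complex.I) * z) r) 0 β)
        (Ioi 0) ∧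
      ∫ r in Ioi 0, secondDiff (fun γ => logKernel (Complex.exp (γ * Complex.I) * z) r) 0 β =
        secondDiff (fun x => (π - |x|) ^ 2 / 2) (Complex.arg z) β := by
  simp only [secondDiff, zero_add, zero_sub, Complex.ofReal_zero, zero_mul, Complex.exp_zero,
    one_mul]
  obtain ⟨i₁, e₁⟩ := integral_logKernel (mul_ne_zero (Complex.exp_ne_zero (β * Complex.I)) hz)
  obtain ⟨i₂, e₂⟩ :=
    integral_logKernel (mul_ne_zero (Complex.exp_ne_zero ((-β : ℝ) * Complex.I)) hz)
  obtain ⟨i₀, e₀⟩ := integral_logKernel hz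
  have i₁₂ : IntegrableOn (fun r => logKernel (Complex.exp (β * Complex.I) * z) r +
      logKernel (Complex.exp ((-β : ℝ) * Complex.I) * z) r) (Ioi 0) := i₁.add i₂
  have i₀' : IntegrableOn (fun r => 2 * logKernel z r) (Ioi 0) := i₀.const_mul 2
  refine ⟨i₁₂.sub i₀', ?_⟩
  rw [integral_sub i₁₂ i₀', integral_add i₁ i₂, integral_const_mul, e₁, e₂, e₀,
    sq_pi_sub_abs_arg_exp_mul hz hβ,
    sq_pi_sub_abs_arg_exp_mul hz (by rwa [abs_neg]), sub_eq_add_neg _ β]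

lemma sum_secondDiff_sq_sub_abs_le {ι : Type*} (s : Multiset ι) (θ : ι → ℝ) {c α : ℝ}
    (hc : 0 ≤ c) (hα : 0 ≤ α) :
    (s.map fun i => secondDiff (fun x => (c - |x|) ^ 2 / 2) (θ i) (2 * α)).sum ≤
      s.card * (2 * α) ^ 2 - 2 * c * α * (s.filter fun i => |θ i| ≤ α).card := by
  set g := fun i => secondDiff (fun x => (c - |x|) ^ 2 / 2) (θ i) (2 * α)
  have hsum_le {t : Multiset ι} {b : ℝ} (h : ∀ i ∈ t, g i ≤ b) : (t.map g).sum ≤ t.card * b := by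
    simpa using Multiset.sum_le_card_nsmul _ b (Multiset.forall_mem_map_iff.2 h)
  set t := s.filter fun i => |θ i| ≤ α
  set t' := s.filter fun i => ¬|θ i| ≤ α
  have ht : (t.map g).sum ≤ t.card * ((2 * α) ^ 2 - 2 * c * α) := hsum_le fun i hi => by
    have h := (Multiset.mem_filter.1 hi).2
    simp only [g, secondDiff_sq_sub_abs_of_abs_le c (h.trans (by linarith : α ≤ 2 * α))]
    nlinarith
  have ht' : (t'.map g).sum ≤ t'.card * (2 * α) ^ 2 :=
    hsum_le fun i _ => secondDiff_sq_sub_abs_le hc _ (by positivity)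
  have hcard : (t.card : ℝ) + t'.card = s.card := by
    rw [← Nat.cast_add, ← Multiset.card_add, Multiset.filter_add_not]
  have hsplit : (s.map g).sum = (t.map g).sum + (t'.map g).sum := by
    rw [← Multiset.sum_add, ← Multiset.map_add, Multiset.filter_add_not]
  rw [hsplit]
  nlinarith

open Classical in
theorem card_filter_abs_arg_le_of_pos {f : ℝ[X]} (hf : ∀ k, 0 ≤ f.coeff k) {α : ℝ}
    (hα : 0 < α) (hα' : α ≤ π / 2) :
    (((f.map (algebraMap ℝ ℂ)).roots.filter (fun z => z ≠ 0 ∧ |Complex.arg z| ≤ α)).card : ℝ) ≤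
      2 * α / π * ((f.map (algebraMap ℝ ℂ)).roots.filter (fun z => z ≠ 0)).card := by
  set S := (f.map (algebraMap ℝ ℂ)).roots.filter (fun z => z ≠ 0)
  have hβ : |2 * α| ≤ π := by rw [abs_of_pos (by positivity)]; linarith
  have hG (z : ℂ) (hz : z ∈ S) := integral_secondDiff_logKernel (Multiset.mem_filter.1 hz).2 hβ
  have hnonneg : 0 ≤ (S.map fun z =>
      secondDiff (fun x => (π - |x|) ^ 2 / 2) (Complex.arg z) (2 * α)).sum := by
    rw [← Multiset.map_congr rfl fun z hz => (hG z hz).2,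
      ← integral_multiset_sum_map _ fun z hz => (hG z hz).1]
    refine integral_nonneg_of_ae ?_
    filter_upwards [ae_restrict_mem measurableSet_Ioi, ae_restrict_of_ae
      ((eventually_all_finset (f.map (algebraMap ℝ ℂ)).roots.toFinset).2
        fun z _ => Measure.ae_ne volume ‖z‖)] with r hr hroots
    exact sum_filter_secondDiff_logKernel_nonneg hf hr
      (fun z hz => hroots z (Multiset.mem_toFinset.2 hz)) _
  have hupper := sum_secondDiff_sq_sub_abs_le S Complex.arg pi_pos.le hα.le
  have hcount : (f.map (algebraMap ℝ ℂ)).roots.filter (fun z => z ≠ 0 ∧ |Complex.arg z| ≤ α) =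
      S.filter fun z => |Complex.arg z| ≤ α := by
    simp only [S, Multiset.filter_filter]
    exact Multiset.filter_congr fun z _ => and_comm
  rw [hcount, div_mul_eq_mul_div, le_div_iff₀ pi_pos]
  nlinarith

end Obrechkoff

open Obrechkoff in
open Classical in
theorem obrechkoff_general (f : Polynomial ℝ)
    (hcoeff : ∀ k, 0 ≤ f.coeff k) (α : ℝ) (hα : 0 ≤ α) (hα' : α ≤ Real.pi / 2) :
    ((((f.map (algebraMap ℝ ℂ)).roots.filter
        (fun z => z ≠ 0 ∧ |Complex.arg z| ≤ α)).card : ℝ)) ≤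
      (2 * α / Real.pi) *
        (((f.map (algebraMap ℝ ℂ)).roots.filter (fun z => z ≠ 0)).card : ℝ) := by
  rcases hα.eq_or_lt with rfl | hα
  · set N : ℝ := (((f.map (algebraMap ℝ ℂ)).roots.filter (fun z => z ≠ 0)).card : ℝ)
    have hlim : Tendsto (fun ε => 2 * ε / π * N) (𝓝[>] 0) (𝓝 (2 * 0 / π * N)) :=
      ((by fun_prop : Continuous fun ε => 2 * ε / π * N).tendsto 0).mono_left nhdsWithin_le_nhds
    refine ge_of_tendsto hlim ?_
    filter_upwards [Ioc_mem_nhdsGT (by positivity : (0 : ℝ) < π / 2)] with ε hε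
    refine le_trans (Nat.cast_le.2 (Multiset.card_le_card (Multiset.monotone_filter_right _ ?_)))
      (card_filter_abs_arg_le_of_pos hcoeff hε.1 hε.2)
    exact fun z hz => ⟨hz.1, hz.2.trans hε.1.le⟩
  · exact card_filter_abs_arg_le_of_pos hcoeff hα hα'

open Classical in
/-- Obrechkoff's inequality for polynomials with nonnegative real coefficients. -/
theorem obrechkoff (f : Polynomial ℝ) (hdeg : 0 < f.natDegree)
    (hcoeff : ∀ k, 0 ≤ f.coeff k) (α : ℝ) (hα : 0 ≤ α) (hα' : α ≤ Real.pi / 2) :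
    ((((f.map (algebraMap ℝ ℂ)).roots.filter
        (fun z => z ≠ 0 ∧ |Complex.arg z| ≤ α)).card : ℝ)) ≤
      (2 * α / Real.pi) *
        (((f.map (algebraMap ℝ ℂ)).roots.filter (fun z => z ≠ 0)).card : ℝ) :=
  obrechkoff_general f hcoeff α hα hα'
end
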